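/- Let 0 < q₁ < p₁ ≤ 1, 0 < q₂ < p₂ ≤ 1, let n, m ≥ 1, and let f : [0,1]² → ℝ be continuous. Then for every (x,y) ∈ [0,1]², |B_{n,m}(f;x,y) - f(x,y)| ≤ 2 ω¹(f, δ_n(x)) + 2 ω²(f, δ_m(y)), where δ_n(x) = √( (p₁^{n-1}/[n]_{p₁,q₁})(x - x²) ) and δ_m(y) = √( (p₂^{m-1}/[m]_{p₂,q₂})(y - y²) ). -/

import Mathlib

open Finset Set Filter Topology

/-- The (p,q)-integer `[n]_{p,q} = ∑_{i=0}^{n-1} p^(n-1-i) q^i`. -/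
noncomputable def pqInt (p q : ℝ) (n : ℕ) : ℝ :=
  ∑ i ∈ Finset.range n, p ^ (n - 1 - i) * q ^ i

/-- The (p,q)-factorial `[n]_{p,q}! = ∏_{j=1}^n [j]_{p,q}`. -/
noncomputable def pqFactorial (p q : ℝ) (n : ℕ) : ℝ :=
  ∏ j ∈ Finset.range n, pqInt p q (j + 1)

/-- The (p,q)-binomial coefficient. -/
noncomputable def pqChoose (p q : ℝ) (n k : ℕ) : ℝ :=
  pqFactorial p q n / (pqFactorial p q k * pqFactorial p q (n - k))

/-- The node `p^(n-k) [k]_{p,q} / [n]_{p,q}` of the (p,q)-Bernstein operator. -/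
noncomputable def pqNode (p q : ℝ) (n k : ℕ) : ℝ :=
  p ^ (n - k) * pqInt p q k / pqInt p q n

/-- The basis function
`p^((k(k-1)-n(n-1))/2) C(n,k)_{p,q} x^k ∏_{s=0}^{n-k-1} (p^s - q^s x)`,
where `p^((k(k-1)-n(n-1))/2)` is written as `p^(k(k-1)/2) / p^(n(n-1)/2)`. -/
noncomputable def pqBasis (p q : ℝ) (n k : ℕ) (x : ℝ) : ℝ :=
  (p ^ (k.choose 2) / p ^ (n.choose 2)) * pqChoose p q n k * x ^ k *
    ∏ s ∈ Finset.range (n - k), (p ^ s - q ^ s * x)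

/-- The (p,q)-Bernstein operator `B_{n,p,q}(f;x)`. -/
noncomputable def pqBernstein (p q : ℝ) (n : ℕ) (f : ℝ → ℝ) (x : ℝ) : ℝ :=
  ∑ k ∈ Finset.range (n + 1), pqBasis p q n k x * f (pqNode p q n k)

/-- The bivariate (p,q)-Bernstein operator
`B_{n,m}^{(p₁,q₁),(p₂,q₂)}(f;x,y)`. -/
noncomputable def pqBernstein2 (p₁ q₁ p₂ q₂ : ℝ) (n m : ℕ)
    (f : ℝ → ℝ → ℝ) (x y : ℝ) : ℝ :=
  ∑ k ∈ Finset.range (n + 1), ∑ j ∈ Finset.range (m + 1),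
    pqBasis p₁ q₁ n k x * pqBasis p₂ q₂ m j y *
      f (pqNode p₁ q₁ n k) (pqNode p₂ q₂ m j)

/-- The first partial modulus of continuity (with respect to `x`) on `[0,1]²`. -/
noncomputable def partialModulus₁ (f : ℝ → ℝ → ℝ) (δ : ℝ) : ℝ :=
  sSup {d : ℝ | ∃ y ∈ Set.Icc (0 : ℝ) 1, ∃ x₁ ∈ Set.Icc (0 : ℝ) 1,
    ∃ x₂ ∈ Set.Icc (0 : ℝ) 1, |x₁ - x₂| ≤ δ ∧ d = |f x₁ y - f x₂ y|}

/-- The second partial modulus of continuity (with respect to `y`) on `[0,1]²`. -/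
noncomputable def partialModulus₂ (f : ℝ → ℝ → ℝ) (δ : ℝ) : ℝ :=
  sSup {d : ℝ | ∃ x ∈ Set.Icc (0 : ℝ) 1, ∃ y₁ ∈ Set.Icc (0 : ℝ) 1,
    ∃ y₂ ∈ Set.Icc (0 : ℝ) 1, |y₁ - y₂| ≤ δ ∧ d = |f x y₁ - f x y₂|}

/-!
The basis functions `pqBasis p q n k x` are nonnegative, sum to `1`, and their nodes have second
central moment `∑ₖ pqBasis p q n k x * (pqNode p q n k - x) ^ 2 = p ^ (n - 1) / [n]_{p,q} * (x - x²)
= δₙ(x)²`; all three moments come from the triangular recurrence of the basis in `n`, written in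
terms of `t = q / p`, for which `pqNode p q n k = [k]_t / [n]_t`. Splitting `[x, a]` into
`⌈|a - x| / δ⌉` pieces of length at most `δ` gives `|g a - g x| ≤ (1 + (a - x)² / δ²) ω(g, δ)`,
so averaging over the nodes gives `|B_n g x - g x| ≤ 2 ω(g, δₙ(x))`.
The bivariate operator is the univariate one in `x` applied at each node in `y`, averaged by the
basis in `y`; hence its error is the `y`-average of the `x`-errors plus the `y`-error of `f x ·`.
-/

theorem abs_sum_mul_le_of_abs_le {ι : Type*} {s : Finset ι} {w h : ι → ℝ} {C : ℝ}
    (hw : ∀ i ∈ s, 0 ≤ w i) (hw₁ : ∑ i ∈ s, w i = 1) (hh : ∀ i ∈ s, |h i| ≤ C) :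
    |∑ i ∈ s, w i * h i| ≤ C :=
  calc |∑ i ∈ s, w i * h i| ≤ ∑ i ∈ s, w i * C := by
        refine (abs_sum_le_sum_abs _ _).trans (sum_le_sum fun i hi => ?_)
        rw [abs_mul, abs_of_nonneg (hw i hi)]
        exact mul_le_mul_of_nonneg_left (hh i hi) (hw i hi)
    _ = C := by rw [← sum_mul, hw₁, one_mul]

section IncrementBound

variable {S : Set ℝ} {g : ℝ → ℝ} {δ ω : ℝ}

theorem abs_sub_le_nat_mul_of_increment_le (hS : Convex ℝ S)
    (hg : ∀ u ∈ S, ∀ v ∈ S, |u - v| ≤ δ → |g u - g v| ≤ ω) :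
    ∀ (N : ℕ) {a b : ℝ}, a ∈ S → b ∈ S → |a - b| ≤ N * δ → |g a - g b| ≤ N * ω
  | 0, a, b, _, _, h => by
    obtain rfl : a = b := sub_eq_zero.1 (abs_nonpos_iff.1 (by simpa using h))
    simp
  | N + 1, a, b, ha, hb, h => by
    set c := b + (1 / (N + 1 : ℝ)) • (a - b) with hc
    have hN : (0 : ℝ) < N + 1 := by positivity
    have hcS : c ∈ S := hS.add_smul_sub_mem hb ha ⟨by positivity, by
      rw [div_le_one hN]; linarith⟩
    have hac : |a - c| = N / (N + 1) * |a - b| := by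
      rw [hc, smul_eq_mul, show a - (b + 1 / (N + 1) * (a - b)) = N / (N + 1) * (a - b) by
        field_simp; ring, abs_mul, abs_of_nonneg (by positivity)]
    have hcb : |c - b| = |a - b| / (N + 1) := by
      rw [hc, smul_eq_mul, add_sub_cancel_left, abs_mul, abs_of_pos (by positivity)]; ring
    push_cast at h ⊢
    have h₁ : |g a - g c| ≤ N * ω := abs_sub_le_nat_mul_of_increment_le hS hg N ha hcS (by
      rw [hac]
      calc N / (N + 1) * |a - b| ≤ N / (N + 1) * ((N + 1) * δ) := by gcongr
        _ = N * δ := by field_simp)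
    have h₂ : |g c - g b| ≤ ω := hg c hcS b hb (by
      rw [hcb, div_le_iff₀ hN]; linarith)
    calc |g a - g b| ≤ |g a - g c| + |g c - g b| := abs_sub_le _ _ _
      _ ≤ (N + 1) * ω := by linarith

theorem Nat.ceil_le_one_add_sq {r : ℝ} (hr : 0 ≤ r) : (⌈r⌉₊ : ℝ) ≤ 1 + r ^ 2 := by
  rcases le_or_gt r 1 with h | h
  · have : ⌈r⌉₊ ≤ 1 := Nat.ceil_le.2 (by simpa using h)
    have : (⌈r⌉₊ : ℝ) ≤ 1 := by exact_mod_cast this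
    nlinarith
  · nlinarith [Nat.ceil_lt_add_one hr]

theorem abs_sub_le_one_add_sq_div_mul (hS : Convex ℝ S) (hδ : 0 < δ)
    (hg : ∀ u ∈ S, ∀ v ∈ S, |u - v| ≤ δ → |g u - g v| ≤ ω) {a b : ℝ} (ha : a ∈ S) (hb : b ∈ S) :
    |g a - g b| ≤ (1 + (a - b) ^ 2 / δ ^ 2) * ω := by
  have hω : 0 ≤ ω := by simpa using hg b hb b hb (by simpa using hδ.le)
  have hr : 0 ≤ |a - b| / δ := by positivity
  calc |g a - g b| ≤ ⌈|a - b| / δ⌉₊ * ω :=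
        abs_sub_le_nat_mul_of_increment_le hS hg _ ha hb
          ((div_le_iff₀ hδ).1 (Nat.le_ceil _))
    _ ≤ (1 + (|a - b| / δ) ^ 2) * ω := by gcongr; exact Nat.ceil_le_one_add_sq hr
    _ = (1 + (a - b) ^ 2 / δ ^ 2) * ω := by rw [div_pow, sq_abs]

theorem abs_sum_mul_sub_le_two_mul {ι : Type*} {s : Finset ι} {w a : ι → ℝ} (hS : Convex ℝ S)
    {x : ℝ} (hx : x ∈ S) (ha : ∀ i ∈ s, a i ∈ S) (hw : ∀ i ∈ s, 0 ≤ w i)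
    (hw₁ : ∑ i ∈ s, w i = 1) (hδ : 0 ≤ δ) (hvar : ∑ i ∈ s, w i * (a i - x) ^ 2 ≤ δ ^ 2)
    (hg : ∀ u ∈ S, ∀ v ∈ S, |u - v| ≤ δ → |g u - g v| ≤ ω) :
    |∑ i ∈ s, w i * g (a i) - g x| ≤ 2 * ω := by
  have hω : 0 ≤ ω := by simpa using hg x hx x hx (by simpa using hδ)
  have hsplit : ∑ i ∈ s, w i * g (a i) - g x = ∑ i ∈ s, w i * (g (a i) - g x) := by
    simp only [mul_sub, sum_sub_distrib, ← sum_mul, hw₁, one_mul]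
  rw [hsplit]
  rcases hδ.eq_or_lt with rfl | hδ
  · -- zero variance: every node carrying weight is `x` itself
    have hterm : ∀ i ∈ s, w i * (a i - x) ^ 2 = 0 :=
      (sum_eq_zero_iff_of_nonneg fun i hi => mul_nonneg (hw i hi) (sq_nonneg _)).1
        (le_antisymm (by simpa using hvar)
          (sum_nonneg fun i hi => mul_nonneg (hw i hi) (sq_nonneg _)))
    rw [sum_eq_zero fun i hi => ?_, abs_zero]
    · positivity
    rcases mul_eq_zero.1 (hterm i hi) with h | h
    · rw [h, zero_mul]
    · rw [sub_eq_zero.1 (pow_eq_zero_iff two_ne_zero |>.1 h), sub_self, mul_zero]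
  · calc |∑ i ∈ s, w i * (g (a i) - g x)|
        ≤ ∑ i ∈ s, w i * ((1 + (a i - x) ^ 2 / δ ^ 2) * ω) := by
          refine (abs_sum_le_sum_abs _ _).trans (sum_le_sum fun i hi => ?_)
          rw [abs_mul, abs_of_nonneg (hw i hi)]
          exact mul_le_mul_of_nonneg_left
            (abs_sub_le_one_add_sq_div_mul hS hδ hg (ha i hi) hx) (hw i hi)
      _ = (∑ i ∈ s, w i + (∑ i ∈ s, w i * (a i - x) ^ 2) / δ ^ 2) * ω := by
          rw [sum_div, ← sum_add_distrib, sum_mul]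
          exact sum_congr rfl fun i _ => by ring
      _ ≤ (1 + δ ^ 2 / δ ^ 2) * ω := by rw [hw₁]; gcongr
      _ = 2 * ω := by rw [div_self (by positivity)]; ring

end IncrementBound

noncomputable def qInt (t : ℝ) (n : ℕ) : ℝ := ∑ i ∈ range n, t ^ i

section QInt

variable {t : ℝ}

theorem qInt_succ (t : ℝ) (n : ℕ) : qInt t (n + 1) = qInt t n + t ^ n :=
  sum_range_succ _ _

theorem qInt_nonneg (ht : 0 < t) (n : ℕ) : 0 ≤ qInt t n :=
  sum_nonneg fun _ _ => by positivity

theorem qInt_pos (ht : 0 < t) {n : ℕ} (hn : 1 ≤ n) : 0 < qInt t n :=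
  sum_pos (fun _ _ => by positivity) (nonempty_range_iff.2 (by omega))

theorem qInt_le_qInt (ht : 0 < t) {k n : ℕ} (hkn : k ≤ n) : qInt t k ≤ qInt t n :=
  sum_le_sum_of_subset_of_nonneg (range_subset_range.2 hkn) fun _ _ _ => by positivity

end QInt

section PQCalculus

variable {p q : ℝ}

theorem pqInt_eq_pow_mul_qInt (hp : p ≠ 0) (q : ℝ) (n : ℕ) :
    pqInt p q n = p ^ (n - 1) * qInt (q / p) n := by
  rw [pqInt, qInt, mul_sum]
  refine sum_congr rfl fun i hi => ?_
  have hi : i < n := mem_range.1 hi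
  rw [div_pow, show n - 1 = (n - 1 - i) + i by omega, pow_add, Nat.add_sub_cancel]
  field_simp

theorem pqInt_pos (hp : 0 < p) (hq : 0 < q) {n : ℕ} (hn : 1 ≤ n) : 0 < pqInt p q n := by
  rw [pqInt_eq_pow_mul_qInt hp.ne' q n]
  exact mul_pos (pow_pos hp _) (qInt_pos (by positivity) hn)

theorem pqInt_add (p q : ℝ) (a b : ℕ) :
    pqInt p q (a + b) = p ^ a * pqInt p q b + q ^ b * pqInt p q a := by
  rw [pqInt, pqInt, pqInt, add_comm a b, sum_range_add, mul_sum, mul_sum]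
  congr 1 <;> refine sum_congr rfl fun i hi => ?_ <;> have hi := mem_range.1 hi
  · rw [show b + a - 1 - i = a + (b - 1 - i) by omega, pow_add]; ring
  · rw [show b + a - 1 - (b + i) = a - 1 - i by omega, pow_add]; ring

theorem pqFactorial_pos (hp : 0 < p) (hq : 0 < q) (n : ℕ) : 0 < pqFactorial p q n :=
  prod_pos fun _ _ => pqInt_pos hp hq (by omega)

theorem pqFactorial_succ (p q : ℝ) (n : ℕ) :
    pqFactorial p q (n + 1) = pqFactorial p q n * pqInt p q (n + 1) :=
  prod_range_succ _ _

theorem pqChoose_pos (hp : 0 < p) (hq : 0 < q) (n k : ℕ) : 0 < pqChoose p q n k := by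
  have := pqFactorial_pos hp hq
  exact div_pos (this n) (mul_pos (this k) (this (n - k)))

theorem pqFactorial_zero (p q : ℝ) : pqFactorial p q 0 = 1 :=
  prod_range_zero _

theorem pqChoose_zero_right (hp : 0 < p) (hq : 0 < q) (n : ℕ) : pqChoose p q n 0 = 1 := by
  rw [pqChoose, pqFactorial_zero, one_mul, Nat.sub_zero, div_self (pqFactorial_pos hp hq n).ne']

theorem pqChoose_self (hp : 0 < p) (hq : 0 < q) (n : ℕ) : pqChoose p q n n = 1 := by
  rw [pqChoose, Nat.sub_self, pqFactorial_zero, mul_one, div_self (pqFactorial_pos hp hq n).ne']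

theorem pqChoose_succ_succ (hp : 0 < p) (hq : 0 < q) {n k : ℕ} (hkn : k + 1 ≤ n) :
    pqChoose p q (n + 1) (k + 1) =
      p ^ (k + 1) * pqChoose p q n (k + 1) + q ^ (n - k) * pqChoose p q n k := by
  have hsplit : pqInt p q (n + 1) =
      p ^ (k + 1) * pqInt p q (n - k) + q ^ (n - k) * pqInt p q (k + 1) := by
    rw [← pqInt_add, show k + 1 + (n - k) = n + 1 by omega]
  have hnk : n - k = n - (k + 1) + 1 := by omega
  unfold pqChoose
  rw [show n + 1 - (k + 1) = n - k by omega, pqFactorial_succ p q n, hnk,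
    pqFactorial_succ p q (n - (k + 1)), pqFactorial_succ p q k, ← hnk, hsplit]
  have := pqFactorial_pos hp hq
  have := (pqInt_pos hp hq (show 1 ≤ k + 1 by omega)).ne'
  have := (pqInt_pos hp hq (show 1 ≤ n - k by omega)).ne'
  field_simp

theorem pqBasis_succ_zero (hp : 0 < p) (hq : 0 < q) (n : ℕ) (x : ℝ) :
    pqBasis p q (n + 1) 0 x = (1 - (q / p) ^ n * x) * pqBasis p q n 0 x := by
  unfold pqBasis
  rw [pqChoose_zero_right hp hq, pqChoose_zero_right hp hq, Nat.sub_zero, Nat.sub_zero,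
    prod_range_succ, Nat.choose_succ_succ, Nat.choose_one_right, pow_add, div_pow]
  generalize ∏ s ∈ range n, (p ^ s - q ^ s * x) = P
  field_simp

theorem pqBasis_succ_self (hp : 0 < p) (hq : 0 < q) (n : ℕ) (x : ℝ) :
    pqBasis p q (n + 1) (n + 1) x = x * pqBasis p q n n x := by
  unfold pqBasis
  rw [pqChoose_self hp hq, pqChoose_self hp hq, div_self (by positivity),
    div_self (by positivity)]
  simp [pow_succ]
  ring

theorem pqBasis_succ_succ (hp : 0 < p) (hq : 0 < q) {n k : ℕ} (hkn : k + 1 ≤ n) (x : ℝ) :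
    pqBasis p q (n + 1) (k + 1) x =
      (1 - (q / p) ^ (n - (k + 1)) * x) * pqBasis p q n (k + 1) x +
        (q / p) ^ (n - k) * x * pqBasis p q n k x := by
  obtain ⟨a, rfl⟩ : ∃ a, n = k + 1 + a := ⟨n - (k + 1), by omega⟩
  unfold pqBasis
  rw [pqChoose_succ_succ hp hq hkn, show k + 1 + a - (k + 1) = a by omega,
    show k + 1 + a + 1 - (k + 1) = a + 1 by omega, show k + 1 + a - k = a + 1 by omega,
    prod_range_succ, Nat.choose_succ_succ (k + 1 + a), Nat.choose_succ_succ k,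
    Nat.choose_one_right, Nat.choose_one_right, pow_add, pow_add, div_pow, div_pow]
  generalize ∏ s ∈ range a, (p ^ s - q ^ s * x) = P
  field_simp
  ring

theorem sum_pqBasis_succ_mul (hp : 0 < p) (hq : 0 < q) (n : ℕ) (x : ℝ) (g : ℕ → ℝ) :
    ∑ k ∈ range (n + 2), pqBasis p q (n + 1) k x * g k =
      ∑ k ∈ range (n + 1), pqBasis p q n k x *
        ((1 - (q / p) ^ (n - k) * x) * g k + (q / p) ^ (n - k) * x * g (k + 1)) := by
  have hinner : ∀ k ∈ range n, pqBasis p q (n + 1) (k + 1) x * g (k + 1) =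
      pqBasis p q n (k + 1) x * ((1 - (q / p) ^ (n - (k + 1)) * x) * g (k + 1)) +
        pqBasis p q n k x * ((q / p) ^ (n - k) * x * g (k + 1)) := fun k hk => by
    rw [pqBasis_succ_succ hp hq (mem_range.1 hk) x]; ring
  simp only [mul_add, sum_add_distrib]
  rw [sum_range_succ', sum_range_succ, sum_congr rfl hinner, sum_add_distrib,
    pqBasis_succ_self hp hq, pqBasis_succ_zero hp hq,
    sum_range_succ' (fun k => pqBasis p q n k x * ((1 - (q / p) ^ (n - k) * x) * g k)),
    sum_range_succ (fun k => pqBasis p q n k x * ((q / p) ^ (n - k) * x * g (k + 1)))]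
  simp only [Nat.sub_self, Nat.sub_zero, pow_zero, one_mul]
  ring


theorem sum_pqBasis (hp : 0 < p) (hq : 0 < q) (n : ℕ) (x : ℝ) :
    ∑ k ∈ range (n + 1), pqBasis p q n k x = 1 := by
  induction n with
  | zero => simp [pqBasis, pqChoose, pqFactorial]
  | succ n ih =>
    simpa [← mul_add, ih] using sum_pqBasis_succ_mul hp hq n x fun _ => 1

theorem sum_pqBasis_mul_qInt (hp : 0 < p) (hq : 0 < q) (n : ℕ) (x : ℝ) :
    ∑ k ∈ range (n + 1), pqBasis p q n k x * qInt (q / p) k = x * qInt (q / p) n := by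
  induction n with
  | zero => simp [qInt]
  | succ n ih =>
    have hstep : ∀ k ∈ range (n + 1), pqBasis p q n k x *
        ((1 - (q / p) ^ (n - k) * x) * qInt (q / p) k +
          (q / p) ^ (n - k) * x * qInt (q / p) (k + 1)) =
        pqBasis p q n k x * qInt (q / p) k + x * (q / p) ^ n * pqBasis p q n k x := by
      intro k hk
      rw [qInt_succ]
      linear_combination pqBasis p q n k x * x *
        pow_sub_mul_pow (q / p) (mem_range_succ_iff.1 hk)
    rw [sum_pqBasis_succ_mul hp hq, sum_congr rfl hstep, sum_add_distrib, ih, ← mul_sum,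
      sum_pqBasis hp hq, qInt_succ]
    ring

theorem sum_pqBasis_mul_pow (hp : 0 < p) (hq : 0 < q) (n : ℕ) (x : ℝ) :
    ∑ k ∈ range (n + 1), pqBasis p q n k x * (q / p) ^ k =
      1 - x * (1 - q / p) * qInt (q / p) n := by
  induction n with
  | zero => simp [pqBasis, pqChoose, pqFactorial, qInt]
  | succ n ih =>
    have hstep : ∀ k ∈ range (n + 1), pqBasis p q n k x *
        ((1 - (q / p) ^ (n - k) * x) * (q / p) ^ k + (q / p) ^ (n - k) * x * (q / p) ^ (k + 1)) =
        pqBasis p q n k x * (q / p) ^ k - x * (q / p) ^ n * (1 - q / p) * pqBasis p q n k x := by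
      intro k hk
      rw [pow_succ]
      linear_combination pqBasis p q n k x * x * (q / p - 1) *
        pow_sub_mul_pow (q / p) (mem_range_succ_iff.1 hk)
    rw [sum_pqBasis_succ_mul hp hq, sum_congr rfl hstep, sum_sub_distrib, ih, ← mul_sum,
      sum_pqBasis hp hq, qInt_succ]
    ring

theorem sum_pqBasis_mul_qInt_sq (hp : 0 < p) (hq : 0 < q) (n : ℕ) (x : ℝ) :
    ∑ k ∈ range (n + 1), pqBasis p q n k x * qInt (q / p) k ^ 2 =
      x ^ 2 * (qInt (q / p) n ^ 2 - qInt (q / p) n) + x * qInt (q / p) n := by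
  induction n with
  | zero => simp [qInt]
  | succ n ih =>
    have hstep : ∀ k ∈ range (n + 1), pqBasis p q n k x *
        ((1 - (q / p) ^ (n - k) * x) * qInt (q / p) k ^ 2 +
          (q / p) ^ (n - k) * x * qInt (q / p) (k + 1) ^ 2) =
        pqBasis p q n k x * qInt (q / p) k ^ 2 +
          2 * x * (q / p) ^ n * (pqBasis p q n k x * qInt (q / p) k) +
          x * (q / p) ^ n * (pqBasis p q n k x * (q / p) ^ k) := by
      intro k hk
      rw [qInt_succ]
      linear_combination pqBasis p q n k x * x * (2 * qInt (q / p) k + (q / p) ^ k) *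
        pow_sub_mul_pow (q / p) (mem_range_succ_iff.1 hk)
    have hgeom : (1 - q / p) * qInt (q / p) n = 1 - (q / p) ^ n := mul_neg_geom_sum _ _
    rw [sum_pqBasis_succ_mul hp hq, sum_congr rfl hstep, sum_add_distrib, sum_add_distrib, ih,
      ← mul_sum, ← mul_sum, sum_pqBasis_mul_qInt hp hq, sum_pqBasis_mul_pow hp hq, qInt_succ]
    linear_combination -x ^ 2 * (q / p) ^ n * hgeom

theorem pqNode_eq_qInt_div (hp : 0 < p) (q : ℝ) {n k : ℕ} (hkn : k ≤ n) :
    pqNode p q n k = qInt (q / p) k / qInt (q / p) n := by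
  rcases Nat.eq_zero_or_pos k with rfl | hk
  · simp [pqNode, pqInt, qInt]
  rw [pqNode, pqInt_eq_pow_mul_qInt hp.ne', pqInt_eq_pow_mul_qInt hp.ne', ← mul_assoc,
    ← pow_add, show n - k + (k - 1) = n - 1 by omega,
    mul_div_mul_left _ _ (pow_ne_zero _ hp.ne')]

theorem pqNode_mem_Icc (hq : 0 < q) (hqp : q < p) {n k : ℕ} (hn : 1 ≤ n) (hkn : k ≤ n) :
    pqNode p q n k ∈ Set.Icc (0 : ℝ) 1 := by
  have hp : 0 < p := hq.trans hqp
  have ht : 0 < q / p := by positivity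
  rw [pqNode_eq_qInt_div hp q hkn]
  exact ⟨div_nonneg (qInt_nonneg ht k) (qInt_nonneg ht n),
    (div_le_one (qInt_pos ht hn)).2 (qInt_le_qInt ht hkn)⟩

theorem pqBasis_nonneg (hq : 0 < q) (hqp : q < p) {x : ℝ} (hx : x ∈ Set.Icc (0 : ℝ) 1)
    (n k : ℕ) : 0 ≤ pqBasis p q n k x := by
  have hp : 0 < p := hq.trans hqp
  have hfactor : ∀ s : ℕ, 0 ≤ p ^ s - q ^ s * x := fun s => by
    have : q ^ s * x ≤ q ^ s := mul_le_of_le_one_right (by positivity) hx.2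
    linarith [pow_le_pow_left₀ hq.le hqp.le s]
  have := pqChoose_pos hp hq n k
  have := hx.1
  have := prod_nonneg fun s (_ : s ∈ range (n - k)) => hfactor s
  unfold pqBasis
  positivity

theorem sum_pqBasis_mul_pqNode_sub_sq (hp : 0 < p) (hq : 0 < q) {n : ℕ} (hn : 1 ≤ n) (x : ℝ) :
    ∑ k ∈ range (n + 1), pqBasis p q n k x * (pqNode p q n k - x) ^ 2 =
      p ^ (n - 1) / pqInt p q n * (x - x ^ 2) := by
  have hT : qInt (q / p) n ≠ 0 := (qInt_pos (by positivity) hn).ne'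
  have hexpand : ∀ k ∈ range (n + 1), pqBasis p q n k x * (pqNode p q n k - x) ^ 2 =
      pqBasis p q n k x * qInt (q / p) k ^ 2 / qInt (q / p) n ^ 2 -
        2 * x / qInt (q / p) n * (pqBasis p q n k x * qInt (q / p) k) +
        x ^ 2 * pqBasis p q n k x := by
    intro k hk
    rw [pqNode_eq_qInt_div hp q (mem_range_succ_iff.1 hk)]
    field_simp
    ring
  rw [sum_congr rfl hexpand, sum_add_distrib, sum_sub_distrib, ← sum_div, ← mul_sum, ← mul_sum,
    sum_pqBasis_mul_qInt_sq hp hq, sum_pqBasis_mul_qInt hp hq, sum_pqBasis hp hq,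
    pqInt_eq_pow_mul_qInt hp.ne', div_mul_cancel_left₀ (pow_ne_zero _ hp.ne')]
  field_simp
  ring

end PQCalculus

theorem abs_pqBernstein_sub_le {p q x ω : ℝ} {n : ℕ} {g : ℝ → ℝ} (hq : 0 < q) (hqp : q < p)
    (hn : 1 ≤ n) (hx : x ∈ Set.Icc (0 : ℝ) 1)
    (hg : ∀ u ∈ Set.Icc (0 : ℝ) 1, ∀ v ∈ Set.Icc (0 : ℝ) 1,
      |u - v| ≤ √(p ^ (n - 1) / pqInt p q n * (x - x ^ 2)) → |g u - g v| ≤ ω) :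
    |pqBernstein p q n g x - g x| ≤ 2 * ω := by
  have hp : 0 < p := hq.trans hqp
  have hvar : 0 ≤ p ^ (n - 1) / pqInt p q n * (x - x ^ 2) :=
    mul_nonneg (div_nonneg (by positivity) (pqInt_pos hp hq hn).le) (by nlinarith [hx.1, hx.2])
  refine abs_sum_mul_sub_le_two_mul (convex_Icc 0 1) hx
    (fun k hk => pqNode_mem_Icc hq hqp hn (mem_range_succ_iff.1 hk))
    (fun k _ => pqBasis_nonneg hq hqp hx n k) (sum_pqBasis hp hq n x) (Real.sqrt_nonneg _) ?_ hg
  rw [sum_pqBasis_mul_pqNode_sub_sq hp hq hn, Real.sq_sqrt hvar]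

theorem pqBernstein2_sub_eq (p₁ q₁ p₂ q₂ : ℝ) (n m : ℕ) (f : ℝ → ℝ → ℝ) (x y : ℝ) :
    pqBernstein2 p₁ q₁ p₂ q₂ n m f x y - f x y =
      ∑ j ∈ range (m + 1), pqBasis p₂ q₂ m j y *
          (pqBernstein p₁ q₁ n (f · (pqNode p₂ q₂ m j)) x - f x (pqNode p₂ q₂ m j)) +
        (pqBernstein p₂ q₂ m (f x) y - f x y) := by
  have hswap : pqBernstein2 p₁ q₁ p₂ q₂ n m f x y =
      ∑ j ∈ range (m + 1), pqBasis p₂ q₂ m j y * pqBernstein p₁ q₁ n (f · (pqNode p₂ q₂ m j)) x := by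
    rw [pqBernstein2, sum_comm]
    simp only [pqBernstein, mul_sum]
    exact sum_congr rfl fun _ _ => sum_congr rfl fun _ _ => by ring
  rw [hswap, pqBernstein]
  simp only [mul_sub, sum_sub_distrib]
  ring

theorem IsCompact.exists_abs_sub_le_of_continuousOn {X : Type*} [TopologicalSpace X]
    {K : Set X} {g : X → ℝ} (hK : IsCompact K) (hg : ContinuousOn g K) :
    ∃ C, ∀ z ∈ K, ∀ w ∈ K, |g z - g w| ≤ C := by
  obtain ⟨C, hC⟩ := Metric.isBounded_iff.1 (hK.image_of_continuousOn hg).isBounded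
  exact ⟨C, fun z hz w hw => by
    simpa [Real.dist_eq] using hC (mem_image_of_mem g hz) (mem_image_of_mem g hw)⟩

section PartialModuli

variable {f : ℝ → ℝ → ℝ}

theorem abs_sub_le_partialModulus₁
    (hf : ContinuousOn (fun z : ℝ × ℝ => f z.1 z.2) (Set.Icc (0 : ℝ) 1 ×ˢ Set.Icc (0 : ℝ) 1))
    {δ x₁ x₂ y : ℝ} (hx₁ : x₁ ∈ Set.Icc (0 : ℝ) 1) (hx₂ : x₂ ∈ Set.Icc (0 : ℝ) 1)
    (hy : y ∈ Set.Icc (0 : ℝ) 1) (h : |x₁ - x₂| ≤ δ) :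
    |f x₁ y - f x₂ y| ≤ partialModulus₁ f δ := by
  obtain ⟨C, hC⟩ := (isCompact_Icc.prod isCompact_Icc).exists_abs_sub_le_of_continuousOn hf
  refine le_csSup ⟨C, ?_⟩ ⟨y, hy, x₁, hx₁, x₂, hx₂, h, rfl⟩
  rintro d ⟨y', hy', a, ha, b, hb, -, rfl⟩
  exact hC (a, y') ⟨ha, hy'⟩ (b, y') ⟨hb, hy'⟩

theorem abs_sub_le_partialModulus₂
    (hf : ContinuousOn (fun z : ℝ × ℝ => f z.1 z.2) (Set.Icc (0 : ℝ) 1 ×ˢ Set.Icc (0 : ℝ) 1))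
    {δ x y₁ y₂ : ℝ} (hx : x ∈ Set.Icc (0 : ℝ) 1) (hy₁ : y₁ ∈ Set.Icc (0 : ℝ) 1)
    (hy₂ : y₂ ∈ Set.Icc (0 : ℝ) 1) (h : |y₁ - y₂| ≤ δ) :
    |f x y₁ - f x y₂| ≤ partialModulus₂ f δ := by
  obtain ⟨C, hC⟩ := (isCompact_Icc.prod isCompact_Icc).exists_abs_sub_le_of_continuousOn hf
  refine le_csSup ⟨C, ?_⟩ ⟨x, hx, y₁, hy₁, y₂, hy₂, h, rfl⟩
  rintro d ⟨x', hx', a, ha, b, hb, -, rfl⟩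
  exact hC (x', a) ⟨hx', ha⟩ (x', b) ⟨hx', hb⟩

end PartialModuli

theorem pqBernstein2_rate_partial_moduli_general (p₁ q₁ p₂ q₂ : ℝ) (n m : ℕ)
    (hq₁ : 0 < q₁) (hq₁p₁ : q₁ < p₁)
    (hq₂ : 0 < q₂) (hq₂p₂ : q₂ < p₂)
    (hn : 1 ≤ n) (hm : 1 ≤ m)
    (f : ℝ → ℝ → ℝ)
    (hf : ContinuousOn (fun z : ℝ × ℝ => f z.1 z.2)
      (Set.Icc (0 : ℝ) 1 ×ˢ Set.Icc (0 : ℝ) 1))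
    (x y : ℝ) (hx : x ∈ Set.Icc (0 : ℝ) 1) (hy : y ∈ Set.Icc (0 : ℝ) 1) :
    |pqBernstein2 p₁ q₁ p₂ q₂ n m f x y - f x y| ≤
      2 * partialModulus₁ f
        (Real.sqrt ((p₁ ^ (n - 1) / pqInt p₁ q₁ n) * (x - x ^ 2))) +
      2 * partialModulus₂ f
        (Real.sqrt ((p₂ ^ (m - 1) / pqInt p₂ q₂ m) * (y - y ^ 2))) := by
  have hx_rate : ∀ j ∈ range (m + 1),
      |pqBernstein p₁ q₁ n (f · (pqNode p₂ q₂ m j)) x - f x (pqNode p₂ q₂ m j)| ≤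
        2 * partialModulus₁ f (√(p₁ ^ (n - 1) / pqInt p₁ q₁ n * (x - x ^ 2))) :=
    fun j hj => abs_pqBernstein_sub_le hq₁ hq₁p₁ hn hx fun u hu v hv huv =>
      abs_sub_le_partialModulus₁ hf hu hv (pqNode_mem_Icc hq₂ hq₂p₂ hm (mem_range_succ_iff.1 hj)) huv
  have hy_rate : |pqBernstein p₂ q₂ m (f x) y - f x y| ≤
      2 * partialModulus₂ f (√(p₂ ^ (m - 1) / pqInt p₂ q₂ m * (y - y ^ 2))) :=
    abs_pqBernstein_sub_le hq₂ hq₂p₂ hm hy fun u hu v hv huv =>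
      abs_sub_le_partialModulus₂ hf hx hu hv huv
  rw [pqBernstein2_sub_eq]
  exact (abs_add_le _ _).trans (add_le_add
    (abs_sum_mul_le_of_abs_le (fun j _ => pqBasis_nonneg hq₂ hq₂p₂ hy m j)
      (sum_pqBasis (hq₂.trans hq₂p₂) hq₂ m y) hx_rate) hy_rate)

theorem pqBernstein2_rate_partial_moduli (p₁ q₁ p₂ q₂ : ℝ) (n m : ℕ)
    (hq₁ : 0 < q₁) (hq₁p₁ : q₁ < p₁) (hp₁ : p₁ ≤ 1)
    (hq₂ : 0 < q₂) (hq₂p₂ : q₂ < p₂) (hp₂ : p₂ ≤ 1)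
    (hn : 1 ≤ n) (hm : 1 ≤ m)
    (f : ℝ → ℝ → ℝ)
    (hf : ContinuousOn (fun z : ℝ × ℝ => f z.1 z.2)
      (Set.Icc (0 : ℝ) 1 ×ˢ Set.Icc (0 : ℝ) 1))
    (x y : ℝ) (hx : x ∈ Set.Icc (0 : ℝ) 1) (hy : y ∈ Set.Icc (0 : ℝ) 1) :
    |pqBernstein2 p₁ q₁ p₂ q₂ n m f x y - f x y| ≤
      2 * partialModulus₁ f
        (Real.sqrt ((p₁ ^ (n - 1) / pqInt p₁ q₁ n) * (x - x ^ 2))) +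
      2 * partialModulus₂ f
        (Real.sqrt ((p₂ ^ (m - 1) / pqInt p₂ q₂ m) * (y - y ^ 2))) :=
  pqBernstein2_rate_partial_moduli_general p₁ q₁ p₂ q₂ n m hq₁ hq₁p₁ hq₂ hq₂p₂ hn hm f hf x y hx hy
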